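/- If R and S are conversion equivalent canonical TRSs that are both compatible with the same reduction order > (ℓ > r for every rule), then R and S are literally similar. -/

import Mathlib

namespace KB

-- Generic ARS notions
def NF {α : Type _} (r : α → α → Prop) (a : α) : Prop := ∀ b, ¬ r a b

def SymmCl {α : Type _} (r : α → α → Prop) (a b : α) : Prop := r a b ∨ r b a

def Conv {α : Type _} (r : α → α → Prop) : α → α → Prop :=
  Relation.ReflTransGen (SymmCl r)

def Joinable {α : Type _} (r : α → α → Prop) (a b : α) : Prop :=
  ∃ c, Relation.ReflTransGen r a c ∧ Relation.ReflTransGen r b c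

def Confluent {α : Type _} (r : α → α → Prop) : Prop :=
  ∀ a b c, Relation.ReflTransGen r a b → Relation.ReflTransGen r a c → Joinable r b c

def Terminating {α : Type _} (r : α → α → Prop) : Prop :=
  WellFounded (fun a b => r b a)

def Complete {α : Type _} (r : α → α → Prop) : Prop := Terminating r ∧ Confluent r

def NormTo {α : Type _} (r : α → α → Prop) (a b : α) : Prop :=
  Relation.ReflTransGen r a b ∧ NF r b

-- First-order terms
inductive Term (F V : Type) : Type where
  | var : V → Term F V
  | app : F → List (Term F V) → Term F V

variable {F V : Type}

def Term.subst (σ : V → Term F V) : Term F V → Term F V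
  | .var x => σ x
  | .app f ts => .app f (ts.attach.map fun t => Term.subst σ t.1)
decreasing_by
  simp only [Term.app.sizeOf_spec]
  have := List.sizeOf_lt_of_mem t.2
  omega

def Term.rename (π : V → V) (t : Term F V) : Term F V :=
  t.subst (fun x => Term.var (π x))

inductive Ctx (F V : Type) : Type where
  | hole : Ctx F V
  | cons : F → List (Term F V) → Ctx F V → List (Term F V) → Ctx F V

def Ctx.fill : Ctx F V → Term F V → Term F V
  | .hole, t => t
  | .cons f l C r, t => Term.app f (l ++ C.fill t :: r)

abbrev TRS (F V : Type) := Set (Term F V × Term F V)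

def Step (R : TRS F V) (s t : Term F V) : Prop :=
  ∃ (C : Ctx F V) (σ : V → Term F V) (l r : Term F V),
    (l, r) ∈ R ∧ s = C.fill (l.subst σ) ∧ t = C.fill (r.subst σ)

inductive InVars (x : V) : Term F V → Prop where
  | var : InVars x (Term.var x)
  | app {f : F} {ts : List (Term F V)} {t : Term F V} :
      t ∈ ts → InVars x t → InVars x (Term.app f ts)

def WellFormedRule (l r : Term F V) : Prop :=
  (∀ x : V, l ≠ Term.var x) ∧ ∀ x, InVars x r → InVars x l

def IsTRS (R : TRS F V) : Prop := ∀ p ∈ R, WellFormedRule p.1 p.2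

inductive Ground : Term F V → Prop where
  | app {f : F} {ts : List (Term F V)} : (∀ t ∈ ts, Ground t) → Ground (Term.app f ts)

def GroundSys (R : TRS F V) : Prop := ∀ p ∈ R, Ground p.1 ∧ Ground p.2

def LeftReduced (R : TRS F V) : Prop := ∀ p ∈ R, NF (Step (R \ {p})) p.1
def RightReduced (R : TRS F V) : Prop := ∀ p ∈ R, NF (Step R) p.2
def Reduced (R : TRS F V) : Prop := LeftReduced R ∧ RightReduced R

def RuleVariant (p q : Term F V × Term F V) : Prop :=
  ∃ π : V → V, Function.Bijective π ∧ p.1 = q.1.rename π ∧ p.2 = q.2.rename π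

def LitSim (R S : TRS F V) : Prop :=
  (∀ p ∈ R, ∃ q ∈ S, RuleVariant p q) ∧ (∀ q ∈ S, ∃ p ∈ R, RuleVariant q p)

def Encompass (s t : Term F V) : Prop :=
  ∃ (C : Ctx F V) (σ : V → Term F V), s = C.fill (t.subst σ)

def PEncompass (s t : Term F V) : Prop := Encompass s t ∧ ¬ Encompass t s

def ReductionOrder (gt : Term F V → Term F V → Prop) : Prop :=
  Transitive gt ∧ WellFounded (fun a b => gt b a) ∧
  (∀ (C : Ctx F V) s t, gt s t → gt (C.fill s) (C.fill t)) ∧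
  (∀ (σ : V → Term F V) s t, gt s t → gt (s.subst σ) (t.subst σ))

-- positions
def subt : List ℕ → Term F V → Option (Term F V)
  | [], t => some t
  | _ :: _, Term.var _ => none
  | i :: p, Term.app _ ts => (ts[i]?).bind (subt p)

def repl : List ℕ → Term F V → Term F V → Option (Term F V)
  | [], _, u => some u
  | _ :: _, Term.var _, _ => none
  | i :: p, Term.app f ts, u =>
      (ts[i]?).bind fun w => (repl p w u).map fun w' => Term.app f (ts.set i w')

def FunPos (p : List ℕ) (t : Term F V) : Prop :=
  ∃ f ts, subt p t = some (Term.app f ts)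

def Unifier (σ : V → Term F V) (s t : Term F V) : Prop := s.subst σ = t.subst σ

def IsMGU (σ : V → Term F V) (s t : Term F V) : Prop :=
  Unifier σ s t ∧ ∀ τ, Unifier τ s t → ∃ ρ, ∀ x, (σ x).subst ρ = τ x

def VarsDisjoint (p q : Term F V × Term F V) : Prop :=
  ∀ x, ¬ ((InVars x p.1 ∨ InVars x p.2) ∧ (InVars x q.1 ∨ InVars x q.2))

def Overlap (R : TRS F V) (l1 r1 : Term F V) (p : List ℕ) (l2 r2 : Term F V) : Prop :=
  (∃ q ∈ R, RuleVariant (l1, r1) q) ∧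
  (∃ q ∈ R, RuleVariant (l2, r2) q) ∧
  VarsDisjoint (l1, r1) (l2, r2) ∧
  FunPos p l2 ∧
  (∃ w, subt p l2 = some w ∧ ∃ σ, Unifier σ l1 w) ∧
  (p = [] → ¬ RuleVariant (l1, r1) (l2, r2))

def CPeak (R : TRS F V) (t : Term F V) (p : List ℕ) (s u : Term F V) : Prop :=
  ∃ (l1 r1 l2 r2 : Term F V) (σ : V → Term F V) (w : Term F V),
    Overlap R l1 r1 p l2 r2 ∧ subt p l2 = some w ∧ IsMGU σ l1 w ∧
    s = l2.subst σ ∧ u = r2.subst σ ∧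
    repl p (l2.subst σ) (r1.subst σ) = some t

def PrimeCPeak (R : TRS F V) (t : Term F V) (p : List ℕ) (s u : Term F V) : Prop :=
  CPeak R t p s u ∧
  ∀ w v, subt p s = some w → (∃ q, q ≠ [] ∧ subt q w = some v) → NF (Step R) v

def PCP (R : TRS F V) : Set (Term F V × Term F V) :=
  { e | ∃ p s, PrimeCPeak R e.1 p s e.2 }

def Nabla (R : TRS F V) (s u w : Term F V) : Prop :=
  Relation.TransGen (Step R) s u ∧ Relation.TransGen (Step R) s w ∧
  (Joinable (Step R) u w ∨ SymmCl (Step (PCP R)) u w)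

-- counted conversions and rewrite sequences
inductive ConvN {α : Type _} (r : α → α → Prop) : ℕ → ℕ → α → α → Prop where
  | refl (a : α) : ConvN r 0 0 a a
  | fwd {l n : ℕ} {a b c : α} : r a b → ConvN r l n b c → ConvN r l (n + 1) a c
  | bwd {l n : ℕ} {a b c : α} : r b a → ConvN r l n b c → ConvN r (l + 1) n a c

inductive StepsN {α : Type _} (r : α → α → Prop) : ℕ → α → α → Prop where
  | refl (a : α) : StepsN r 0 a a
  | step {n : ℕ} {a b c : α} : r a b → StepsN r n b c → StepsN r (n + 1) a c

def RandomDescent {α : Type _} (r : α → α → Prop) : Prop :=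
  ∀ l m a b, ConvN r l m a b → NF r b → ∃ n, StepsN r n a b ∧ n + l = m

/-!
Fix a rule `l → r` of `R`. Since `→_R` and `→_S` both live inside the well-founded order `>`,
no cycle `a →_S b →*_R a` exists, so `R` and `S` have the same normal forms. Hence `r` is
`S`-normal and `l →⁺_S r`, the first step using a rule `l₂ → r₂` of `S` with `l = C[l₂σ]`.
Now `l₂` is `R`-reducible, and left-reducedness of `R` leaves only the rule `l → r` itself to
reduce it, so `l₂ = C'[lτ]`. Comparing sizes in `l = C[C'σ[lτσ]]` gives `C = C' = □`, so `στ`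
fixes `l₂` and `σ` is a renaming of the variables of `l₂`. Then `r₂σ` is `S`-normal because `r₂`
is, and it is the `S`-normal form of `l`, i.e. `r = r₂σ`.
-/

section AbstractRewriting

open Relation

variable {α : Type _} {r s : α → α → Prop} {a b c : α}

theorem NF.eq_of_reflTransGen (ha : NF r a) (h : ReflTransGen r a b) : a = b :=
  h.cases_head.resolve_right fun ⟨_, hac, _⟩ => ha _ hac

theorem Confluent.eq_of_nf (hr : Confluent r) (hab : ReflTransGen r a b)
    (hac : ReflTransGen r a c) (hb : NF r b) (hc : NF r c) : b = c := by
  obtain ⟨d, hbd, hcd⟩ := hr a b c hab hac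
  rw [hb.eq_of_reflTransGen hbd, hc.eq_of_reflTransGen hcd]

theorem Confluent.joinable_of_conv (hr : Confluent r) (h : Conv r a b) : Joinable r a b := by
  induction h with
  | refl => exact ⟨a, .refl, .refl⟩
  | tail _ hbc ih =>
    obtain ⟨d, had, hbd⟩ := ih
    rcases hbc with hbc | hcb
    · obtain ⟨e, hde, hce⟩ := hr _ _ _ hbd (.single hbc)
      exact ⟨e, had.trans hde, hce⟩
    · exact ⟨d, had, .head hcb hbd⟩

theorem Confluent.reflTransGen_of_conv_of_nf (hr : Confluent r) (h : Conv r a b)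
    (hb : NF r b) : ReflTransGen r a b := by
  obtain ⟨c, hac, hbc⟩ := hr.joinable_of_conv h
  rwa [hb.eq_of_reflTransGen hbc]

theorem Conv.symm (h : Conv r a b) : Conv r b a := by
  induction h with
  | refl => exact .refl
  | tail _ hbc ih => exact .head (Or.symm hbc) ih

theorem NF.of_conv_of_confluent (hr : Confluent r) (hsr : ∀ a b, s a b → Conv r a b)
    (hrs : Terminating fun a b => r a b ∨ s a b) (ha : NF r a) : NF s a := by
  intro b hab
  have hba : ReflTransGen r b a :=
    hr.reflTransGen_of_conv_of_nf (hsr a b hab).symm ha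
  have hcycle : TransGen (fun a b => r a b ∨ s a b) a a :=
    .head' (Or.inr hab) (ReflTransGen.mono (fun _ _ => Or.inl) _ _ hba)
  exact hrs.transGen.irrefl.irrefl a (transGen_swap.mpr hcycle)

end AbstractRewriting

theorem exists_perm_eqOn {α : Type _} {s : Set α} (hs : s.Finite) {g : α → α}
    (hg : s.InjOn g) : ∃ π : Equiv.Perm α, s.EqOn π g := by
  have := hs.to_subtype
  obtain ⟨π, hπ⟩ := Equiv.Perm.exists_extending_pair ((↑) : s → α) (s.domRestrict g)
    Subtype.val_injective hg.injective
  exact ⟨π, fun x hx => hπ ⟨x, hx⟩⟩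

namespace Term

theorem induction {P : Term F V → Prop} (var : ∀ x, P (.var x))
    (app : ∀ f ts, (∀ t ∈ ts, P t) → P (.app f ts)) : ∀ t, P t
  | .var x => var x
  | .app f ts => app f ts fun t _ => induction var app t
decreasing_by
  simp only [Term.app.sizeOf_spec]
  have := List.sizeOf_lt_of_mem (by assumption : t ∈ ts)
  omega

@[simp]
theorem var_subst (σ : V → Term F V) (x : V) : (var x).subst σ = σ x := by
  rw [subst]

@[simp]
theorem app_subst (σ : V → Term F V) (f : F) (ts : List (Term F V)) :
    (app f ts).subst σ = app f (ts.map (·.subst σ)) := by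
  rw [subst]; simp

theorem subst_subst (σ τ : V → Term F V) (t : Term F V) :
    (t.subst σ).subst τ = t.subst fun x => (σ x).subst τ := by
  induction t using Term.induction with
  | var x => simp
  | app f ts ih => simpa using List.map_congr_left ih

theorem subst_congr {σ τ : V → Term F V} {t : Term F V}
    (h : ∀ x, InVars x t → σ x = τ x) : t.subst σ = t.subst τ := by
  induction t using Term.induction with
  | var x => simpa using h x .var
  | app f ts ih =>
    simpa using List.map_congr_left fun t ht => ih t ht fun x hx => h x (.app ht hx)

@[simp]
theorem subst_var (t : Term F V) : t.subst var = t := by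
  induction t using Term.induction with
  | var x => simp
  | app f ts ih => simpa using List.map_congr_left ih

theorem eq_var_of_subst_eq_self {σ : V → Term F V} {t : Term F V} (h : t.subst σ = t)
    {x : V} (hx : InVars x t) : σ x = var x := by
  induction t using Term.induction with
  | var y => cases hx; simpa using h
  | app f ts ih =>
    obtain _ | ⟨ht, hx⟩ := hx
    simp only [app_subst, app.injEq, true_and] at h
    exact ih _ ht (List.map_eq_map_iff.mp (h.trans (List.map_id' ts).symm) _ ht) hx

theorem vars_finite (t : Term F V) : {x | InVars x t}.Finite := by
  induction t using Term.induction with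
  | var x => exact (Set.finite_singleton x).subset fun y hy => by cases hy; rfl
  | app f ts ih =>
    refine (ts.finite_toSet.biUnion ih).subset fun x hx => ?_
    obtain _ | ⟨ht, hx⟩ := hx
    exact Set.mem_biUnion ht hx

theorem exists_perm_of_subst_subst_eq_var {σ τ : V → Term F V} {t : Term F V}
    (h : ∀ x, InVars x t → (σ x).subst τ = var x) :
    ∃ π : Equiv.Perm V, ∀ x, InVars x t → σ x = var (π x) := by
  let g : V → V := fun y => match σ y with
    | var x => x
    | app _ _ => y
  have hg : ∀ y, InVars y t → σ y = var (g y) := by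
    intro y hy
    have := h y hy
    simp only [g]
    split <;> simp_all
  have hinj : Set.InjOn g {y | InVars y t} := by
    intro y hy y' hy' he
    have hyy := h y hy
    rw [hg y hy, he, ← hg y' hy'] at hyy
    exact var.inj (hyy.symm.trans (h y' hy'))
  obtain ⟨π, hπ⟩ := exists_perm_eqOn (vars_finite t) hinj
  exact ⟨π, fun x hx => (hg x hx).trans (congrArg var (hπ hx).symm)⟩

def size : Term F V → ℕ
  | .var _ => 1
  | .app _ ts => 1 + (ts.attach.map fun t => size t.1).sum
decreasing_by
  simp only [Term.app.sizeOf_spec]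
  have := List.sizeOf_lt_of_mem t.2
  omega

@[simp]
theorem size_var (x : V) : (var x : Term F V).size = 1 := by
  rw [size]

@[simp]
theorem size_app (f : F) (ts : List (Term F V)) :
    (app f ts).size = 1 + (ts.map size).sum := by
  rw [size]; simp

theorem one_le_size (t : Term F V) : 1 ≤ t.size := by
  cases t <;> simp

theorem size_le_size_subst (σ : V → Term F V) (t : Term F V) : t.size ≤ (t.subst σ).size := by
  induction t using Term.induction with
  | var x => simpa using one_le_size (σ x)
  | app f ts ih =>
    have : (ts.map size).sum ≤ (ts.map fun t => (t.subst σ).size).sum := List.sum_le_sum ih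
    simpa [Function.comp_def] using this

end Term

namespace Ctx

def subst (σ : V → Term F V) : Ctx F V → Ctx F V
  | .hole => .hole
  | .cons f l C r => .cons f (l.map (·.subst σ)) (C.subst σ) (r.map (·.subst σ))

def comp : Ctx F V → Ctx F V → Ctx F V
  | .hole, D => D
  | .cons f l C r, D => .cons f l (C.comp D) r

theorem fill_subst (σ : V → Term F V) (C : Ctx F V) (t : Term F V) :
    (C.fill t).subst σ = (C.subst σ).fill (t.subst σ) := by
  induction C with
  | hole => rfl
  | cons f l C r ih => simp [fill, subst, ih]

theorem comp_fill (C D : Ctx F V) (t : Term F V) : (C.comp D).fill t = C.fill (D.fill t) := by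
  induction C with
  | hole => rfl
  | cons f l C r ih => simp [fill, comp, ih]

theorem size_le_size_fill (C : Ctx F V) (t : Term F V) : t.size ≤ (C.fill t).size := by
  induction C with
  | hole => rfl
  | cons f l C r ih => simp [fill]; omega

theorem eq_hole_of_size_fill_le {C : Ctx F V} {t : Term F V} (h : (C.fill t).size ≤ t.size) :
    C = .hole := by
  cases C with
  | hole => rfl
  | cons f l C r => simp [fill] at h; have := C.size_le_size_fill t; omega

end Ctx

namespace Step

variable {R : TRS F V} {s t : Term F V}

theorem of_mem {l r : Term F V} (h : (l, r) ∈ R) : Step R l r :=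
  ⟨.hole, .var, l, r, h, by simp [Ctx.fill], by simp [Ctx.fill]⟩

theorem subst (h : Step R s t) (τ : V → Term F V) : Step R (s.subst τ) (t.subst τ) := by
  obtain ⟨C, σ, l, r, hlr, rfl, rfl⟩ := h
  exact ⟨C.subst τ, fun x => (σ x).subst τ, l, r, hlr,
    by rw [Ctx.fill_subst, Term.subst_subst], by rw [Ctx.fill_subst, Term.subst_subst]⟩

theorem fill (h : Step R s t) (D : Ctx F V) : Step R (D.fill s) (D.fill t) := by
  obtain ⟨C, σ, l, r, hlr, rfl, rfl⟩ := h
  exact ⟨D.comp C, σ, l, r, hlr, by rw [Ctx.comp_fill], by rw [Ctx.comp_fill]⟩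

end Step

theorem ReductionOrder.rel_of_step {gt : Term F V → Term F V → Prop} (hgt : ReductionOrder gt)
    {R : TRS F V} (hR : ∀ p ∈ R, gt p.1 p.2) {s t : Term F V} (h : Step R s t) : gt s t := by
  obtain ⟨C, σ, l, r, hlr, rfl, rfl⟩ := h
  exact hgt.2.2.1 C _ _ (hgt.2.2.2 σ _ _ (hR _ hlr))

theorem ReductionOrder.terminating_step_or_step {gt : Term F V → Term F V → Prop}
    (hgt : ReductionOrder gt) {R S : TRS F V} (hR : ∀ p ∈ R, gt p.1 p.2)
    (hS : ∀ p ∈ S, gt p.1 p.2) : Terminating fun a b => Step R a b ∨ Step S a b :=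
  Subrelation.wf (fun h => h.elim (hgt.rel_of_step hR) (hgt.rel_of_step hS)) hgt.2.1

theorem LeftReduced.eq_subst_of_eq_fill {R : TRS F V} (hR : LeftReduced R) {l r : Term F V}
    (hp : (l, r) ∈ R) {C : Ctx F V} {σ : V → Term F V} {t : Term F V}
    (hl : l = C.fill (t.subst σ)) (ht : ¬ NF (Step R) t) :
    C = .hole ∧ ∃ τ, t = l.subst τ := by
  obtain ⟨u, C', τ, l', r', h', rfl, rfl⟩ : ∃ u, Step R t u := by simpa [NF] using ht
  obtain rfl : l = l' := by
    by_contra hne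
    have : Step (R \ {(l, r)}) (C'.fill (l'.subst τ)) (C'.fill (r'.subst τ)) :=
      ⟨C', τ, l', r', ⟨h', fun h => hne (congrArg Prod.fst h).symm⟩, rfl, rfl⟩
    have hstep := (this.subst σ).fill C
    rw [← hl] at hstep
    exact hR _ hp _ hstep
  have h₁ := l.size_le_size_subst τ
  have h₂ := (C'.fill (l.subst τ)).size_le_size_subst σ
  have h₃ := C.size_le_size_fill ((C'.fill (l.subst τ)).subst σ)
  have h₄ := C'.size_le_size_fill (l.subst τ)
  rw [← hl] at h₃
  refine ⟨Ctx.eq_hole_of_size_fill_le (by rw [← hl]; omega), τ, ?_⟩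
  rw [Ctx.eq_hole_of_size_fill_le (C := C') (t := l.subst τ) (by omega), Ctx.fill]

theorem exists_mem_ruleVariant {R S : TRS F V} (hS : IsTRS S) (hRl : LeftReduced R)
    (hRr : RightReduced R) (hSr : RightReduced S) (hSc : Confluent (Step S))
    (hnf : ∀ a, NF (Step R) a → NF (Step S) a) (hRS : ∀ a b, Step R a b → Conv (Step S) a b)
    {l r : Term F V} (hp : (l, r) ∈ R) : ∃ q ∈ S, RuleVariant (l, r) q := by
  have hr : NF (Step S) r := hnf r (hRr _ hp)
  have hlr : Relation.ReflTransGen (Step S) l r :=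
    hSc.reflTransGen_of_conv_of_nf (hRS l r (.of_mem hp)) hr
  have hne : l ≠ r := fun h => hRr _ hp r (by subst h; exact .of_mem hp)
  obtain ⟨-, ⟨C, σ, l₂, r₂, h₂, hl, -⟩, -⟩ := hlr.cases_head.resolve_left hne
  obtain ⟨rfl, τ, hl₂⟩ := hRl.eq_subst_of_eq_fill hp hl fun h => hnf l₂ h r₂ (.of_mem h₂)
  rw [Ctx.fill] at hl
  have hστ : ∀ x, InVars x l₂ → (σ x).subst τ = .var x := fun x hx =>
    Term.eq_var_of_subst_eq_self (by rw [← Term.subst_subst, ← hl, ← hl₂]) hx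
  have hr₂ : NF (Step S) (r₂.subst σ) := fun u hu => by
    have := hu.subst τ
    rw [Term.subst_subst, Term.subst_congr fun x hx => hστ x ((hS _ h₂).2 x hx),
      Term.subst_var] at this
    exact hSr _ h₂ _ this
  have hrr₂ : r = r₂.subst σ := hSc.eq_of_nf hlr (.single ⟨.hole, σ, l₂, r₂, h₂, hl, rfl⟩) hr hr₂
  obtain ⟨π, hπ⟩ := Term.exists_perm_of_subst_subst_eq_var hστ
  refine ⟨(l₂, r₂), h₂, π, π.bijective, ?_, ?_⟩
  · exact hl.trans (Term.subst_congr hπ)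
  · exact hrr₂.trans (Term.subst_congr fun x hx => hπ x ((hS _ h₂).2 x hx))

/-- Equivalent canonical TRSs compatible with the same reduction order are
literally similar. -/
theorem canonical_equiv_litsim {F V : Type} (R S : TRS F V)
    (hR : IsTRS R) (hS : IsTRS S)
    (hRcan : Complete (Step R) ∧ Reduced R)
    (hScan : Complete (Step S) ∧ Reduced S)
    (hconv : ∀ a b, Conv (Step R) a b ↔ Conv (Step S) a b)
    (gt : Term F V → Term F V → Prop) (hgt : ReductionOrder gt)
    (hRgt : ∀ p ∈ R, gt p.1 p.2) (hSgt : ∀ p ∈ S, gt p.1 p.2) :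
    LitSim R S := by
  obtain ⟨⟨-, hRc⟩, hRl, hRr⟩ := hRcan
  obtain ⟨⟨-, hSc⟩, hSl, hSr⟩ := hScan
  have hRS : ∀ a b, Step R a b → Conv (Step S) a b :=
    fun a b h => (hconv a b).mp (.single (.inl h))
  have hSR : ∀ a b, Step S a b → Conv (Step R) a b :=
    fun a b h => (hconv a b).mpr (.single (.inl h))
  have hnfRS : ∀ a, NF (Step R) a → NF (Step S) a :=
    fun _ => NF.of_conv_of_confluent hRc hSR (hgt.terminating_step_or_step hRgt hSgt)
  have hnfSR : ∀ a, NF (Step S) a → NF (Step R) a :=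
    fun _ => NF.of_conv_of_confluent hSc hRS (hgt.terminating_step_or_step hSgt hRgt)
  exact ⟨fun _ hp => exists_mem_ruleVariant hS hRl hRr hSr hSc hnfRS hRS hp,
    fun _ hq => exists_mem_ruleVariant hR hSl hSr hRr hRc hnfSR hSR hq⟩

end KB
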